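/- Let E be a real normed vector space, n ≥ 1, M ≥ 0, and let μ be a measure on E with ∫ ‖x‖ dμ(x) < ∞. For j = 1, 2, let T₁ʲ, …, Tₙʲ : E → E and S₁ʲ, …, Sₙʲ : E → E be continuous linear maps, all with operator norm at most M, and let g₁, …, gₙ : E → E and h₁, …, hₙ : E → E be maps that are each 1-Lipschitz and norm-nonincreasing. Let Fʲ be the layered network with layers (Tᵢʲ, gᵢ) and Hʲ the layered network with layers (Sᵢʲ, hᵢ), and define the cycle loss L_cyc(j) = ∫ ‖Hʲ(Fʲ(x)) − x‖ dμ(x), assuming both integrands are measurable and integrable. Then |L_cyc(1) − L_cyc(2)| ≤ M^{2n−1} · (Σ_{i=1}^{n} ‖Tᵢ¹ − Tᵢ²‖ + Σ_{i=1}^{n} ‖Sᵢ¹ − Sᵢ²‖) · ∫ ‖x‖ dμ(x), where all norms of linear maps are operator norms. -/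
import Mathlib


open MeasureTheory

/-- The layered network with linear layers `T i` and activations `g i`, `i = 1, …, n`,
applied to an input `x`: `y 0 = x` and `y i = g i (T i (y (i-1)))`. -/
def layeredNet {E : Type*} [NormedAddCommGroup E] [NormedSpace ℝ E]
    (T : ℕ → E →L[ℝ] E) (g : ℕ → E → E) (x : E) : ℕ → E
  | 0 => x
  | i + 1 => g (i + 1) (T (i + 1) (layeredNet T g x i))

section Aux

variable {E : Type*} [NormedAddCommGroup E] [NormedSpace ℝ E] {n : ℕ} {M : ℝ}

lemma layeredNet_norm_le (hM : 0 ≤ M) (T : ℕ → E →L[ℝ] E) (g : ℕ → E → E)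
    (hT : ∀ i ∈ Finset.Icc 1 n, ‖T i‖ ≤ M)
    (hg : ∀ i ∈ Finset.Icc 1 n, ∀ u : E, ‖g i u‖ ≤ ‖u‖)
    (x : E) : ∀ k, k ≤ n → ‖layeredNet T g x k‖ ≤ M ^ k * ‖x‖ := by
  intro k
  induction k with
  | zero => intro _; simp [layeredNet]
  | succ k ih =>
    intro hk
    have hmem : k + 1 ∈ Finset.Icc 1 n :=
      Finset.mem_Icc.2 ⟨Nat.succ_le_succ (Nat.zero_le k), hk⟩
    have h1 : ‖layeredNet T g x k‖ ≤ M ^ k * ‖x‖ := ih (le_of_lt hk)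
    calc ‖layeredNet T g x (k + 1)‖
        ≤ ‖T (k + 1) (layeredNet T g x k)‖ := hg _ hmem _
      _ ≤ ‖T (k + 1)‖ * ‖layeredNet T g x k‖ := (T (k + 1)).le_opNorm _
      _ ≤ M * (M ^ k * ‖x‖) :=
          mul_le_mul (hT _ hmem) h1 (norm_nonneg _) hM
      _ = M ^ (k + 1) * ‖x‖ := by ring

lemma layeredNet_lipschitz (hM : 0 ≤ M) (T : ℕ → E →L[ℝ] E) (g : ℕ → E → E)
    (hT : ∀ i ∈ Finset.Icc 1 n, ‖T i‖ ≤ M)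
    (hg : ∀ i ∈ Finset.Icc 1 n, ∀ u v : E, ‖g i u - g i v‖ ≤ ‖u - v‖)
    (x y : E) : ∀ k, k ≤ n →
      ‖layeredNet T g x k - layeredNet T g y k‖ ≤ M ^ k * ‖x - y‖ := by
  intro k
  induction k with
  | zero => intro _; simp [layeredNet]
  | succ k ih =>
    intro hk
    have hmem : k + 1 ∈ Finset.Icc 1 n :=
      Finset.mem_Icc.2 ⟨Nat.succ_le_succ (Nat.zero_le k), hk⟩
    have h1 : ‖layeredNet T g x k - layeredNet T g y k‖ ≤ M ^ k * ‖x - y‖ :=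
      ih (le_of_lt hk)
    calc ‖layeredNet T g x (k + 1) - layeredNet T g y (k + 1)‖
        ≤ ‖T (k + 1) (layeredNet T g x k) - T (k + 1) (layeredNet T g y k)‖ :=
          hg _ hmem _ _
      _ = ‖T (k + 1) (layeredNet T g x k - layeredNet T g y k)‖ := by rw [map_sub]
      _ ≤ ‖T (k + 1)‖ * ‖layeredNet T g x k - layeredNet T g y k‖ :=
          (T (k + 1)).le_opNorm _
      _ ≤ M * (M ^ k * ‖x - y‖) :=
          mul_le_mul (hT _ hmem) h1 (norm_nonneg _) hM
      _ = M ^ (k + 1) * ‖x - y‖ := by ring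

lemma layeredNet_diff_le (hM : 0 ≤ M) (T₁ T₂ : ℕ → E →L[ℝ] E) (g : ℕ → E → E)
    (hT₁ : ∀ i ∈ Finset.Icc 1 n, ‖T₁ i‖ ≤ M)
    (hT₂ : ∀ i ∈ Finset.Icc 1 n, ‖T₂ i‖ ≤ M)
    (hgLip : ∀ i ∈ Finset.Icc 1 n, ∀ u v : E, ‖g i u - g i v‖ ≤ ‖u - v‖)
    (hgNorm : ∀ i ∈ Finset.Icc 1 n, ∀ u : E, ‖g i u‖ ≤ ‖u‖)
    (x : E) : ∀ k, k ≤ n →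
      ‖layeredNet T₁ g x k - layeredNet T₂ g x k‖ ≤
        M ^ (k - 1) * (∑ i ∈ Finset.Icc 1 k, ‖T₁ i - T₂ i‖) * ‖x‖ := by
  intro k
  induction k with
  | zero => intro _; simp [layeredNet]
  | succ k ih =>
    intro hk
    have hmem : k + 1 ∈ Finset.Icc 1 n :=
      Finset.mem_Icc.2 ⟨Nat.succ_le_succ (Nat.zero_le k), hk⟩
    have hkn : k ≤ n := le_of_lt hk
    have h1 : ‖layeredNet T₁ g x k - layeredNet T₂ g x k‖ ≤
        M ^ (k - 1) * (∑ i ∈ Finset.Icc 1 k, ‖T₁ i - T₂ i‖) * ‖x‖ := ih hkn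
    have hz : ‖layeredNet T₂ g x k‖ ≤ M ^ k * ‖x‖ :=
      layeredNet_norm_le hM T₂ g hT₂ hgNorm x k hkn
    have hsplit :
        T₁ (k + 1) (layeredNet T₁ g x k) - T₂ (k + 1) (layeredNet T₂ g x k) =
        T₁ (k + 1) (layeredNet T₁ g x k - layeredNet T₂ g x k) +
          (T₁ (k + 1) - T₂ (k + 1)) (layeredNet T₂ g x k) := by
      simp [map_sub, ContinuousLinearMap.sub_apply]
    have hstep :
        ‖layeredNet T₁ g x (k + 1) - layeredNet T₂ g x (k + 1)‖ ≤
          M * ‖layeredNet T₁ g x k - layeredNet T₂ g x k‖ +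
            ‖T₁ (k + 1) - T₂ (k + 1)‖ * (M ^ k * ‖x‖) := by
      calc ‖layeredNet T₁ g x (k + 1) - layeredNet T₂ g x (k + 1)‖
          ≤ ‖T₁ (k + 1) (layeredNet T₁ g x k) - T₂ (k + 1) (layeredNet T₂ g x k)‖ :=
            hgLip _ hmem _ _
        _ ≤ ‖T₁ (k + 1) (layeredNet T₁ g x k - layeredNet T₂ g x k)‖ +
              ‖(T₁ (k + 1) - T₂ (k + 1)) (layeredNet T₂ g x k)‖ := by
            rw [hsplit]; exact norm_add_le _ _
        _ ≤ ‖T₁ (k + 1)‖ * ‖layeredNet T₁ g x k - layeredNet T₂ g x k‖ +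
              ‖T₁ (k + 1) - T₂ (k + 1)‖ * ‖layeredNet T₂ g x k‖ :=
            add_le_add ((T₁ (k + 1)).le_opNorm _) ((T₁ (k + 1) - T₂ (k + 1)).le_opNorm _)
        _ ≤ M * ‖layeredNet T₁ g x k - layeredNet T₂ g x k‖ +
              ‖T₁ (k + 1) - T₂ (k + 1)‖ * (M ^ k * ‖x‖) :=
            add_le_add
              (mul_le_mul (hT₁ _ hmem) le_rfl (norm_nonneg _) hM)
              (mul_le_mul le_rfl hz (norm_nonneg _) (norm_nonneg _))
    have hsum : (∑ i ∈ Finset.Icc 1 (k + 1), ‖T₁ i - T₂ i‖) =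
        (∑ i ∈ Finset.Icc 1 k, ‖T₁ i - T₂ i‖) + ‖T₁ (k + 1) - T₂ (k + 1)‖ :=
      Finset.sum_Icc_succ_top (Nat.succ_le_succ (Nat.zero_le k)) _
    have hMmul : M * (M ^ (k - 1) * (∑ i ∈ Finset.Icc 1 k, ‖T₁ i - T₂ i‖) * ‖x‖) ≤
        M ^ k * (∑ i ∈ Finset.Icc 1 k, ‖T₁ i - T₂ i‖) * ‖x‖ := by
      rcases Nat.eq_zero_or_pos k with hk0 | hk0
      · subst hk0; simp
      · have : M * M ^ (k - 1) = M ^ k := by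
          rw [← pow_succ']
          congr 1
          omega
        apply le_of_eq
        rw [← this]; ring
    calc ‖layeredNet T₁ g x (k + 1) - layeredNet T₂ g x (k + 1)‖
        ≤ M * ‖layeredNet T₁ g x k - layeredNet T₂ g x k‖ +
            ‖T₁ (k + 1) - T₂ (k + 1)‖ * (M ^ k * ‖x‖) := hstep
      _ ≤ M * (M ^ (k - 1) * (∑ i ∈ Finset.Icc 1 k, ‖T₁ i - T₂ i‖) * ‖x‖) +
            ‖T₁ (k + 1) - T₂ (k + 1)‖ * (M ^ k * ‖x‖) := by
          gcongr
      _ ≤ M ^ k * (∑ i ∈ Finset.Icc 1 k, ‖T₁ i - T₂ i‖) * ‖x‖ +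
            ‖T₁ (k + 1) - T₂ (k + 1)‖ * (M ^ k * ‖x‖) :=
          add_le_add hMmul le_rfl
      _ = M ^ ((k + 1) - 1) * (∑ i ∈ Finset.Icc 1 (k + 1), ‖T₁ i - T₂ i‖) * ‖x‖ := by
          rw [hsum]; simp; ring

end Aux

/-- Bound on the change of the cycle loss of two pairs of `n`-layer networks:
`|L_cyc(1) − L_cyc(2)| ≤ M^(2n−1) * (∑ᵢ ‖Tᵢ¹ − Tᵢ²‖ + ∑ᵢ ‖Sᵢ¹ − Sᵢ²‖) * ∫ ‖x‖ dμ`. -/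
theorem cycle_loss_diff_le {E : Type*}
    [NormedAddCommGroup E] [NormedSpace ℝ E] [MeasurableSpace E]
    (n : ℕ) (hn : 1 ≤ n) (M : ℝ) (hM : 0 ≤ M)
    (μ : Measure E) (hx : Integrable (fun x => ‖x‖) μ)
    (T₁ T₂ S₁ S₂ : ℕ → E →L[ℝ] E) (g h : ℕ → E → E)
    (hT₁ : ∀ i ∈ Finset.Icc 1 n, ‖T₁ i‖ ≤ M)
    (hT₂ : ∀ i ∈ Finset.Icc 1 n, ‖T₂ i‖ ≤ M)
    (hS₁ : ∀ i ∈ Finset.Icc 1 n, ‖S₁ i‖ ≤ M)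
    (hS₂ : ∀ i ∈ Finset.Icc 1 n, ‖S₂ i‖ ≤ M)
    (hgLip : ∀ i ∈ Finset.Icc 1 n, ∀ u v : E, ‖g i u - g i v‖ ≤ ‖u - v‖)
    (hgNorm : ∀ i ∈ Finset.Icc 1 n, ∀ u : E, ‖g i u‖ ≤ ‖u‖)
    (hhLip : ∀ i ∈ Finset.Icc 1 n, ∀ u v : E, ‖h i u - h i v‖ ≤ ‖u - v‖)
    (hhNorm : ∀ i ∈ Finset.Icc 1 n, ∀ u : E, ‖h i u‖ ≤ ‖u‖)
    (hi₁ : Integrable (fun x => ‖layeredNet S₁ h (layeredNet T₁ g x n) n - x‖) μ)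
    (hi₂ : Integrable (fun x => ‖layeredNet S₂ h (layeredNet T₂ g x n) n - x‖) μ) :
    |(∫ x, ‖layeredNet S₁ h (layeredNet T₁ g x n) n - x‖ ∂μ) -
        ∫ x, ‖layeredNet S₂ h (layeredNet T₂ g x n) n - x‖ ∂μ| ≤
      M ^ (2 * n - 1) *
        ((∑ i ∈ Finset.Icc 1 n, ‖T₁ i - T₂ i‖) + ∑ i ∈ Finset.Icc 1 n, ‖S₁ i - S₂ i‖) *
        ∫ x, ‖x‖ ∂μ := by
  set ST := ∑ i ∈ Finset.Icc 1 n, ‖T₁ i - T₂ i‖ with hST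
  set SS := ∑ i ∈ Finset.Icc 1 n, ‖S₁ i - S₂ i‖ with hSS
  have hST0 : 0 ≤ ST := Finset.sum_nonneg fun i _ => norm_nonneg _
  have hSS0 : 0 ≤ SS := Finset.sum_nonneg fun i _ => norm_nonneg _
  set C := M ^ (2 * n - 1) * (ST + SS) with hC
  have hC0 : 0 ≤ C := by positivity
  have hpow : M ^ n * M ^ (n - 1) = M ^ (2 * n - 1) := by
    rw [← pow_add]; congr 1; omega
  -- pointwise bound
  have key : ∀ x : E,
      ‖layeredNet S₁ h (layeredNet T₁ g x n) n -
        layeredNet S₂ h (layeredNet T₂ g x n) n‖ ≤ C * ‖x‖ := by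
    intro x
    set F₁ := layeredNet T₁ g x n with hF₁
    set F₂ := layeredNet T₂ g x n with hF₂
    have hF₂norm : ‖F₂‖ ≤ M ^ n * ‖x‖ :=
      layeredNet_norm_le hM T₂ g hT₂ hgNorm x n le_rfl
    have hFdiff : ‖F₁ - F₂‖ ≤ M ^ (n - 1) * ST * ‖x‖ :=
      layeredNet_diff_le hM T₁ T₂ g hT₁ hT₂ hgLip hgNorm x n le_rfl
    have t1 : ‖layeredNet S₁ h F₁ n - layeredNet S₁ h F₂ n‖ ≤
        M ^ n * (M ^ (n - 1) * ST * ‖x‖) := by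
      calc ‖layeredNet S₁ h F₁ n - layeredNet S₁ h F₂ n‖
          ≤ M ^ n * ‖F₁ - F₂‖ :=
            layeredNet_lipschitz hM S₁ h hS₁ hhLip F₁ F₂ n le_rfl
        _ ≤ M ^ n * (M ^ (n - 1) * ST * ‖x‖) := by gcongr
    have t2 : ‖layeredNet S₁ h F₂ n - layeredNet S₂ h F₂ n‖ ≤
        M ^ (n - 1) * SS * (M ^ n * ‖x‖) := by
      calc ‖layeredNet S₁ h F₂ n - layeredNet S₂ h F₂ n‖
          ≤ M ^ (n - 1) * SS * ‖F₂‖ :=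
            layeredNet_diff_le hM S₁ S₂ h hS₁ hS₂ hhLip hhNorm F₂ n le_rfl
        _ ≤ M ^ (n - 1) * SS * (M ^ n * ‖x‖) := by gcongr
    calc ‖layeredNet S₁ h F₁ n - layeredNet S₂ h F₂ n‖
        ≤ ‖layeredNet S₁ h F₁ n - layeredNet S₁ h F₂ n‖ +
            ‖layeredNet S₁ h F₂ n - layeredNet S₂ h F₂ n‖ := norm_sub_le_norm_sub_add_norm_sub _ _ _
      _ ≤ M ^ n * (M ^ (n - 1) * ST * ‖x‖) + M ^ (n - 1) * SS * (M ^ n * ‖x‖) :=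
          add_le_add t1 t2
      _ = (M ^ n * M ^ (n - 1)) * (ST + SS) * ‖x‖ := by ring
      _ = C * ‖x‖ := by rw [hpow]
  have ptwise : ∀ x : E,
      |‖layeredNet S₁ h (layeredNet T₁ g x n) n - x‖ -
        ‖layeredNet S₂ h (layeredNet T₂ g x n) n - x‖| ≤ C * ‖x‖ := by
    intro x
    calc |‖layeredNet S₁ h (layeredNet T₁ g x n) n - x‖ -
          ‖layeredNet S₂ h (layeredNet T₂ g x n) n - x‖|
        ≤ ‖(layeredNet S₁ h (layeredNet T₁ g x n) n - x) -
            (layeredNet S₂ h (layeredNet T₂ g x n) n - x)‖ := abs_norm_sub_norm_le _ _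
      _ = ‖layeredNet S₁ h (layeredNet T₁ g x n) n -
            layeredNet S₂ h (layeredNet T₂ g x n) n‖ := by rw [sub_sub_sub_cancel_right]
      _ ≤ C * ‖x‖ := key x
  rw [← integral_sub hi₁ hi₂]
  calc |∫ x, (‖layeredNet S₁ h (layeredNet T₁ g x n) n - x‖ -
          ‖layeredNet S₂ h (layeredNet T₂ g x n) n - x‖) ∂μ|
      ≤ ∫ x, |‖layeredNet S₁ h (layeredNet T₁ g x n) n - x‖ -
          ‖layeredNet S₂ h (layeredNet T₂ g x n) n - x‖| ∂μ := by
        simpa [Real.norm_eq_abs] using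
          norm_integral_le_integral_norm
            (fun x => ‖layeredNet S₁ h (layeredNet T₁ g x n) n - x‖ -
              ‖layeredNet S₂ h (layeredNet T₂ g x n) n - x‖) (μ := μ)
    _ ≤ ∫ x, C * ‖x‖ ∂μ :=
        integral_mono (hi₁.sub hi₂).abs (hx.const_mul C) fun x => ptwise x
    _ = C * ∫ x, ‖x‖ ∂μ := integral_const_mul C _
    _ = M ^ (2 * n - 1) * (ST + SS) * ∫ x, ‖x‖ ∂μ := by rw [hC]
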